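/- Let m ≥ 2 and let T_m satisfy the multi-sublinear size condition with constant C. Then there is a constant C′ > 0 (depending only on C, m, n) such that for every x_0 ∈ ℝ^n, every r > 0, every m-tuple f⃗ = (f_1,…,f_m) of integrable functions with compact supports all contained in the complement of B(x_0,2r), and every x ∈ B(x_0,r), one has |T_m(f⃗)(x)| ≤ C′ · Π_{i=1}^m ∫_{ℝ^n∖B(x_0,2r)} |f_i(y_i)| · |x_0−y_i|^{−n} dy_i. -/

import Mathlib

open MeasureTheory ENNReal Set

noncomputable section

/-- Euclidean distance on `Fin n → ℝ`. -/
def eudist (n : ℕ) (x y : Fin n → ℝ) : ℝ :=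
  Real.sqrt (∑ i, (x i - y i) ^ 2)

/-- Open Euclidean ball in `Fin n → ℝ`. -/
def eball (n : ℕ) (x : Fin n → ℝ) (r : ℝ) : Set (Fin n → ℝ) :=
  {y | eudist n x y < r}

/-- Iterated mixed Lebesgue "norm" of an `ℝ≥0∞`-valued function: the innermost
integration is in the first coordinate with exponent `q 0`, the outermost in the
last coordinate with exponent `q (n-1)`. -/
def mixedLnorm : (n : ℕ) → (Fin n → ℝ) → ((Fin n → ℝ) → ℝ≥0∞) → ℝ≥0∞
  | 0, _, g => g (fun i => i.elim0)
  | (n + 1), q, g =>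
      (∫⁻ t : ℝ, (mixedLnorm n (fun i => q i.castSucc)
          (fun y => g (Fin.snoc y t))) ^ q (Fin.last n)) ^ (1 / q (Fin.last n))

/-- Mixed Lebesgue norm `‖f‖_{L^{q⃗}}` of a real-valued function on `ℝ^n`. -/
def mixedNorm (n : ℕ) (q : Fin n → ℝ) (f : (Fin n → ℝ) → ℝ) : ℝ≥0∞ :=
  mixedLnorm n q (fun x => ENNReal.ofReal |f x|)

/-- Generalized mixed Morrey norm of an `ℝ≥0∞`-valued function. -/
def morreyLnorm (n : ℕ) (q : Fin n → ℝ) (φ : (Fin n → ℝ) → ℝ → ℝ)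
    (g : (Fin n → ℝ) → ℝ≥0∞) : ℝ≥0∞ :=
  ⨆ (x : Fin n → ℝ) (r : ℝ) (_ : 0 < r),
    (ENNReal.ofReal (φ x r))⁻¹
      * (mixedNorm n q ((eball n x r).indicator fun _ => (1 : ℝ)))⁻¹
      * mixedLnorm n q ((eball n x r).indicator g)

/-- Generalized mixed Morrey norm `‖f‖_{M^φ_{q⃗}}` of a real-valued function. -/
def morreyNorm (n : ℕ) (q : Fin n → ℝ) (φ : (Fin n → ℝ) → ℝ → ℝ)
    (f : (Fin n → ℝ) → ℝ) : ℝ≥0∞ :=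
  morreyLnorm n q φ (fun x => ENNReal.ofReal |f x|)

/-- The BMO norm (as an extended real number). -/
def bmoNorm (n : ℕ) (b : (Fin n → ℝ) → ℝ) : ℝ≥0∞ :=
  ⨆ (x : Fin n → ℝ) (r : ℝ) (_ : 0 < r),
    ENNReal.ofReal ((volume (eball n x r)).toReal⁻¹
      * ∫ y in eball n x r, |b y - ⨍ z in eball n x r, b z|)

/-- Sublinearity in each entry of a multi-(sub)linear operator. -/
def EntrywiseSublinear (n m : ℕ)
    (T : (Fin m → ((Fin n → ℝ) → ℝ)) → ((Fin n → ℝ) → ℝ)) : Prop :=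
  (∀ (f : Fin m → ((Fin n → ℝ) → ℝ)) (i : Fin m) (g h : (Fin n → ℝ) → ℝ)
      (x : Fin n → ℝ),
      |T (Function.update f i (g + h)) x|
        ≤ |T (Function.update f i g) x| + |T (Function.update f i h) x|) ∧
  (∀ (f : Fin m → ((Fin n → ℝ) → ℝ)) (i : Fin m) (c : ℝ) (g : (Fin n → ℝ) → ℝ)
      (x : Fin n → ℝ),
      |T (Function.update f i (c • g)) x| = |c| * |T (Function.update f i g) x|)

/-- The multi-sublinear size condition (1.1) with constant `C`. -/
def SizeCond (n m : ℕ)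
    (T : (Fin m → ((Fin n → ℝ) → ℝ)) → ((Fin n → ℝ) → ℝ)) (C : ℝ) : Prop :=
  ∀ f : Fin m → ((Fin n → ℝ) → ℝ),
    (∀ i, Integrable (f i)) → (∀ i, HasCompactSupport (f i)) →
    ∀ x, x ∉ ⋂ j, Function.support (f j) →
      |T f x| ≤ C * ∫ y : Fin m → (Fin n → ℝ),
        (∏ i, |f i (y i)|) / Real.sqrt (∑ i, eudist n x (y i) ^ 2) ^ (m * n)

/-- The multi-sublinear commutator size condition (1.2), with symbol `b` and
distinguished index `i`, with constant `C`. -/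
def CommSizeCond (n m : ℕ) (b : (Fin n → ℝ) → ℝ) (i : Fin m)
    (T : (Fin m → ((Fin n → ℝ) → ℝ)) → ((Fin n → ℝ) → ℝ)) (C : ℝ) : Prop :=
  ∀ f : Fin m → ((Fin n → ℝ) → ℝ),
    (∀ k, Integrable (f k)) → (∀ k, HasCompactSupport (f k)) →
    ∀ x, x ∉ ⋂ j, Function.support (f j) →
      |T f x| ≤ C * ∫ y : Fin m → (Fin n → ℝ),
        |b x - b (y i)| * (∏ k, |f k (y k)|)
          / Real.sqrt (∑ k, eudist n x (y k) ^ 2) ^ (m * n)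

/-- The Hardy–Littlewood maximal operator. -/
def hlMax (n : ℕ) (f : (Fin n → ℝ) → ℝ) (x : Fin n → ℝ) : ℝ≥0∞ :=
  ⨆ (r : ℝ) (_ : 0 < r),
    (volume (eball n x r))⁻¹ * ∫⁻ y in eball n x r, ENNReal.ofReal |f y|

/-- The maximal commutator of the Hardy–Littlewood maximal operator. -/
def maxComm (n : ℕ) (b f : (Fin n → ℝ) → ℝ) (x : Fin n → ℝ) : ℝ≥0∞ :=
  ⨆ (r : ℝ) (_ : 0 < r),
    (volume (eball n x r))⁻¹
      * ∫⁻ y in eball n x r, ENNReal.ofReal (|b x - b y| * |f y|)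

/-- The multi-sublinear maximal operator `M_m`. -/
def multiMax (n m : ℕ) (f : Fin m → ((Fin n → ℝ) → ℝ)) (x : Fin n → ℝ) : ℝ≥0∞ :=
  ⨆ (r : ℝ) (_ : 0 < r),
    ∏ i, (volume (eball n x r))⁻¹ * ∫⁻ y in eball n x r, ENNReal.ofReal |f i y|

/-- The multi-sublinear maximal commutator `M^{b⃗}_{m,i}`. -/
def multiMaxComm (n m : ℕ) (b : Fin m → ((Fin n → ℝ) → ℝ)) (i : Fin m)
    (f : Fin m → ((Fin n → ℝ) → ℝ)) (x : Fin n → ℝ) : ℝ≥0∞ :=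
  (⨆ (r : ℝ) (_ : 0 < r),
      (volume (eball n x r))⁻¹
        * ∫⁻ y in eball n x r, ENNReal.ofReal (|b i x - b i y| * |f i y|)) *
  (⨆ (r : ℝ) (_ : 0 < r),
      ∏ k ∈ Finset.univ.erase i,
        (volume (eball n x r))⁻¹ * ∫⁻ y in eball n x r, ENNReal.ofReal |f k y|)

/-- `w` is an `A₁` weight with constant `c`. -/
def IsA1Weight (n : ℕ) (w : (Fin n → ℝ) → ℝ) (c : ℝ) : Prop :=
  (∀ x, 0 < w x) ∧ LocallyIntegrable w ∧
    ∀ (x : Fin n → ℝ) (r : ℝ), 0 < r →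
      ∀ᵐ y ∂(volume.restrict (eball n x r)),
        (volume (eball n x r)).toReal⁻¹ * ∫ z in eball n x r, w z ≤ c * w y

/-- `T` is an `m`-linear Calderón–Zygmund operator. -/
def IsCZOperator (n m : ℕ)
    (T : (Fin m → ((Fin n → ℝ) → ℝ)) → ((Fin n → ℝ) → ℝ)) : Prop :=
  -- additivity in each entry
  (∀ (f : Fin m → ((Fin n → ℝ) → ℝ)) (i : Fin m) (g h : (Fin n → ℝ) → ℝ),
      T (Function.update f i (g + h))
        = T (Function.update f i g) + T (Function.update f i h)) ∧
  -- homogeneity in each entry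
  (∀ (f : Fin m → ((Fin n → ℝ) → ℝ)) (i : Fin m) (c : ℝ) (g : (Fin n → ℝ) → ℝ),
      T (Function.update f i (c • g)) = c • T (Function.update f i g)) ∧
  -- boundedness from a product of Lebesgue spaces
  (∃ (s : Fin m → ℝ) (s₀ A : ℝ), (∀ i, 1 ≤ s i) ∧ 0 < s₀ ∧
      (1 / s₀ = ∑ i, 1 / s i) ∧ 0 < A ∧
      ∀ f : Fin m → ((Fin n → ℝ) → ℝ), (∀ i, Measurable (f i)) →
        (∀ i, mixedNorm n (fun _ => s i) (f i) ≠ ⊤) →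
        mixedNorm n (fun _ => s₀) (T f)
          ≤ ENNReal.ofReal A * ∏ i, mixedNorm n (fun _ => s i) (f i)) ∧
  -- Calderón–Zygmund kernel and representation
  (∃ (K : (Fin n → ℝ) → (Fin m → (Fin n → ℝ)) → ℝ) (ε C : ℝ), 0 < ε ∧ 0 < C ∧
      -- size estimate
      (∀ x y, ¬(∀ k, y k = x) →
        |K x y| ≤ C / (∑ k, eudist n x (y k)) ^ (m * n)) ∧
      -- regularity in the first variable
      (∀ x x' y, ¬(∀ k, y k = x) →
        2 * eudist n x x' ≤ (⨆ k, eudist n x (y k)) →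
        |K x y - K x' y|
          ≤ C * eudist n x x' ^ ε / (∑ k, eudist n x (y k)) ^ ((m * n : ℝ) + ε)) ∧
      -- regularity in each of the remaining variables
      (∀ x y (k : Fin m) (y' : Fin n → ℝ), ¬(∀ j, y j = x) →
        2 * eudist n (y k) y' ≤ (⨆ j, eudist n x (y j)) →
        |K x y - K x (Function.update y k y')|
          ≤ C * eudist n (y k) y' ^ ε / (∑ j, eudist n x (y j)) ^ ((m * n : ℝ) + ε)) ∧
      -- integral representation off the supports
      (∀ f : Fin m → ((Fin n → ℝ) → ℝ),
        (∀ j, Measurable (f j)) → (∀ j, ∃ M : ℝ, ∀ x, |f j x| ≤ M) →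
        (∀ j, HasCompactSupport (f j)) →
        ∀ x, x ∉ ⋂ j, Function.support (f j) →
          T f x = ∫ y : Fin m → (Fin n → ℝ), K x y * ∏ j, f j (y j)))

/-- The commutator `K^{b⃗}_{m,i}` of an `m`-linear operator. -/
def czComm (n m : ℕ) (T : (Fin m → ((Fin n → ℝ) → ℝ)) → ((Fin n → ℝ) → ℝ))
    (b : Fin m → ((Fin n → ℝ) → ℝ)) (i : Fin m)
    (f : Fin m → ((Fin n → ℝ) → ℝ)) : (Fin n → ℝ) → ℝ :=
  fun x => b i x * T f x - T (Function.update f i fun y => b i y * f i y) x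


/-!
For `x ∈ B(x₀, r)` and `yᵢ ∉ B(x₀, 2r)` the triangle inequality gives
`|x₀ - yᵢ| ≤ 2 |x - yᵢ| ≤ 2 |(x - y₁, …, x - yₘ)|`, so the multilinear kernel
`|(x - y₁, …, x - yₘ)|^{-mn}` is at most `2^{mn} ∏ᵢ |x₀ - yᵢ|^{-n}`. Off the supports the size
condition applies at `x`, and the majorant splits into a product of one-variable integrals.
-/

lemma eudist_eq_dist (n : ℕ) (x y : Fin n → ℝ) :
    eudist n x y = dist (WithLp.toLp 2 x : EuclideanSpace ℝ (Fin n)) (WithLp.toLp 2 y) := by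
  rw [EuclideanSpace.dist_eq]
  simp [eudist, Real.dist_eq, sq_abs]

lemma eudist_nonneg (n : ℕ) (x y : Fin n → ℝ) : 0 ≤ eudist n x y := by
  rw [eudist_eq_dist]; exact dist_nonneg

lemma eudist_triangle (n : ℕ) (x y z : Fin n → ℝ) :
    eudist n x z ≤ eudist n x y + eudist n y z := by
  simp only [eudist_eq_dist]; exact dist_triangle _ _ _

lemma continuous_eudist (n : ℕ) (x : Fin n → ℝ) : Continuous (eudist n x) := by
  unfold eudist; fun_prop

lemma le_eudist_of_notMem_eball {n : ℕ} {x y : Fin n → ℝ} {r : ℝ} (hy : y ∉ eball n x r) :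
    r ≤ eudist n x y :=
  not_lt.mp hy

lemma eball_subset_eball {n : ℕ} {x : Fin n → ℝ} {r s : ℝ} (hrs : r ≤ s) :
    eball n x r ⊆ eball n x s :=
  fun _ hy => lt_of_lt_of_le hy hrs

lemma half_eudist_le_of_mem_eball_of_notMem_eball {n : ℕ} {x₀ x y : Fin n → ℝ} {r : ℝ}
    (hx : x ∈ eball n x₀ r) (hy : y ∉ eball n x₀ (2 * r)) :
    eudist n x₀ y / 2 ≤ eudist n x y := by
  have hx' : eudist n x₀ x < r := hx
  linarith [le_eudist_of_notMem_eball hy, eudist_triangle n x₀ x y]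

lemma eudist_le_sqrt_sum_sq {n m : ℕ} (x : Fin n → ℝ) (y : Fin m → Fin n → ℝ) (i : Fin m) :
    eudist n x (y i) ≤ Real.sqrt (∑ j, eudist n x (y j) ^ 2) :=
  Real.le_sqrt_of_sq_le <|
    Finset.single_le_sum (f := fun j => eudist n x (y j) ^ 2) (fun _ _ => sq_nonneg _)
      (Finset.mem_univ i)

lemma div_pow_le_two_pow_mul_div_pow {a d S : ℝ} (n : ℕ) (ha : 0 ≤ a) (hd : 0 < d)
    (hdS : d / 2 ≤ S) : a / S ^ n ≤ 2 ^ n * (a / d ^ n) :=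
  calc a / S ^ n ≤ a / (d / 2) ^ n := by gcongr
    _ = 2 ^ n * (a / d ^ n) := by rw [div_pow]; field_simp

lemma prod_abs_div_sqrt_pow_le {n m : ℕ} {x₀ x : Fin n → ℝ} {r : ℝ}
    {f : Fin m → (Fin n → ℝ) → ℝ} (hx : x ∈ eball n x₀ r)
    (hsupp : ∀ i, Function.support (f i) ⊆ (eball n x₀ (2 * r))ᶜ) (y : Fin m → Fin n → ℝ) :
    (∏ i, |f i (y i)|) / Real.sqrt (∑ i, eudist n x (y i) ^ 2) ^ (m * n)
      ≤ 2 ^ (m * n) * ∏ i, |f i (y i)| / eudist n x₀ (y i) ^ n := by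
  set S := Real.sqrt (∑ i, eudist n x (y i) ^ 2)
  have hsplit : (∏ i, |f i (y i)|) / S ^ (m * n) = ∏ i, |f i (y i)| / S ^ n := by
    rw [Finset.prod_div_distrib, Finset.prod_const, Finset.card_univ, Fintype.card_fin,
      ← pow_mul, mul_comm]
  have hmajor : 2 ^ (m * n) * ∏ i, |f i (y i)| / eudist n x₀ (y i) ^ n
      = ∏ i, 2 ^ n * (|f i (y i)| / eudist n x₀ (y i) ^ n) := by
    rw [Finset.prod_mul_distrib, Finset.prod_const, Finset.card_univ, Fintype.card_fin,
      ← pow_mul, mul_comm n]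
  rw [hsplit, hmajor]
  refine Finset.prod_le_prod (fun i _ => by positivity) fun i _ => ?_
  by_cases hfi : f i (y i) = 0
  · simp [hfi]
  have hyi : y i ∉ eball n x₀ (2 * r) := hsupp i hfi
  have hr : 0 < r := (eudist_nonneg n x₀ x).trans_lt hx
  exact div_pow_le_two_pow_mul_div_pow n (abs_nonneg _)
    (by linarith [le_eudist_of_notMem_eball hyi])
    ((half_eudist_le_of_mem_eball_of_notMem_eball hx hyi).trans (eudist_le_sqrt_sum_sq x y i))

lemma integrable_abs_div_eudist_pow {n : ℕ} {x₀ : Fin n → ℝ} {ρ : ℝ} (hρ : 0 < ρ)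
    {g : (Fin n → ℝ) → ℝ} (hg : Integrable g) (hsupp : Function.support g ⊆ (eball n x₀ ρ)ᶜ) :
    Integrable fun y => |g y| / eudist n x₀ y ^ n := by
  have hmeas : AEStronglyMeasurable (fun y => |g y| / eudist n x₀ y ^ n) volume :=
    hg.1.norm.div₀ ((continuous_eudist n x₀).pow n).aestronglyMeasurable
  refine (hg.norm.div_const (ρ ^ n)).mono' hmeas (Filter.Eventually.of_forall fun y => ?_)
  rw [Real.norm_eq_abs, abs_div, abs_abs, abs_pow, abs_of_nonneg (eudist_nonneg n x₀ y)]
  by_cases hy : g y = 0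
  · simp [hy]
  · exact div_le_div_of_nonneg_left (abs_nonneg _) (by positivity)
      (pow_le_pow_left₀ hρ.le (le_eudist_of_notMem_eball (hsupp hy)) n)

theorem stmt3_general (n m : ℕ) (hm : 2 ≤ m)
    (T : (Fin m → ((Fin n → ℝ) → ℝ)) → ((Fin n → ℝ) → ℝ))
    (C : ℝ) (hC : 0 < C) (hT : SizeCond n m T C) :
    ∃ C' : ℝ, 0 < C' ∧ ∀ (x₀ : Fin n → ℝ) (r : ℝ), 0 < r →
      ∀ f : Fin m → ((Fin n → ℝ) → ℝ),
        (∀ i, Integrable (f i)) → (∀ i, HasCompactSupport (f i)) →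
        (∀ i, Function.support (f i) ⊆ (eball n x₀ (2 * r))ᶜ) →
        ∀ x ∈ eball n x₀ r,
          |T f x| ≤ C' * ∏ i, ∫ y in (eball n x₀ (2 * r))ᶜ,
            |f i y| / eudist n x₀ y ^ n := by
  refine ⟨C * 2 ^ (m * n), by positivity, fun x₀ r hr f hf hcs hsupp x hx => ?_⟩
  have hx_supp : x ∉ ⋂ j, Function.support (f j) := fun h =>
    hsupp ⟨0, by omega⟩ (mem_iInter.mp h _) (eball_subset_eball (by linarith) hx)
  have hg : ∀ i, Integrable fun y => |f i y| / eudist n x₀ y ^ n := fun i =>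
    integrable_abs_div_eudist_pow (by positivity) (hf i) (hsupp i)
  have hg_restrict : ∀ i, ∫ y, |f i y| / eudist n x₀ y ^ n
      = ∫ y in (eball n x₀ (2 * r))ᶜ, |f i y| / eudist n x₀ y ^ n := fun i =>
    (setIntegral_eq_integral_of_forall_compl_eq_zero fun y hy => by
      simp [Function.notMem_support.mp fun h => hy (hsupp i h)]).symm
  calc |T f x|
      ≤ C * ∫ y : Fin m → Fin n → ℝ,
          (∏ i, |f i (y i)|) / Real.sqrt (∑ i, eudist n x (y i) ^ 2) ^ (m * n) :=
        hT f hf hcs x hx_supp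
    _ ≤ C * ∫ y : Fin m → Fin n → ℝ, 2 ^ (m * n) * ∏ i, |f i (y i)| / eudist n x₀ (y i) ^ n := by
        refine mul_le_mul_of_nonneg_left ?_ hC.le
        exact integral_mono_of_nonneg (Filter.Eventually.of_forall fun _ => by positivity)
          ((Integrable.fintype_prod hg).const_mul _)
          (Filter.Eventually.of_forall (prod_abs_div_sqrt_pow_le hx hsupp))
    _ = C * 2 ^ (m * n) * ∏ i, ∫ y in (eball n x₀ (2 * r))ᶜ, |f i y| / eudist n x₀ y ^ n := by
        rw [integral_const_mul, integral_fintype_prod_volume_eq_prod (f := fun i y =>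
          |f i y| / eudist n x₀ y ^ n), mul_assoc]
        simp only [hg_restrict]

theorem stmt3 (n m : ℕ) (hn : 0 < n) (hm : 2 ≤ m)
    (T : (Fin m → ((Fin n → ℝ) → ℝ)) → ((Fin n → ℝ) → ℝ))
    (C : ℝ) (hC : 0 < C) (hT : SizeCond n m T C) :
    ∃ C' : ℝ, 0 < C' ∧ ∀ (x₀ : Fin n → ℝ) (r : ℝ), 0 < r →
      ∀ f : Fin m → ((Fin n → ℝ) → ℝ),
        (∀ i, Integrable (f i)) → (∀ i, HasCompactSupport (f i)) →
        (∀ i, Function.support (f i) ⊆ (eball n x₀ (2 * r))ᶜ) →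
        ∀ x ∈ eball n x₀ r,
          |T f x| ≤ C' * ∏ i, ∫ y in (eball n x₀ (2 * r))ᶜ,
            |f i y| / eudist n x₀ y ^ n :=
  stmt3_general n m hm T C hC hT
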